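/- Suppose n ≥ 2k ≥ 2, A ∈ ℝ^{m×n} satisfies the restricted isometry property of order 2k with constant δ_{2k} < √2 − 1, and y = Ax for some k-sparse vector x ∈ Σ_k. If x̂ is any minimizer of ‖z‖₁ over the set A⁻¹(y) = {z ∈ ℝⁿ : Az = y}, then x̂ = x. -/

import Mathlib

open Finset

/-- The ℓ₂-norm on `Fin n → ℝ`. -/
noncomputable def l2norm {n : ℕ} (x : Fin n → ℝ) : ℝ := Real.sqrt (∑ i, (x i) ^ 2)

/-- The ℓ₁-norm on `Fin n → ℝ`. -/
def l1norm {n : ℕ} (x : Fin n → ℝ) : ℝ := ∑ i, |x i|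

/-- A vector is `k`-sparse if it has at most `k` nonzero components. -/
def KSparse {n : ℕ} (k : ℕ) (x : Fin n → ℝ) : Prop :=
  Set.ncard {i : Fin n | x i ≠ 0} ≤ k

/-- `A` satisfies the restricted isometry property of order `k` with constant `δ`. -/
def RIP {m n : ℕ} (A : Matrix (Fin m) (Fin n) ℝ) (k : ℕ) (δ : ℝ) : Prop :=
  ∀ u : Fin n → ℝ, KSparse k u →
    (1 - δ) * ∑ i, (u i) ^ 2 ≤ ∑ i, (A.mulVec u i) ^ 2 ∧
    ∑ i, (A.mulVec u i) ^ 2 ≤ (1 + δ) * ∑ i, (u i) ^ 2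

/-! Write `h = xhat - x ∈ ker A` and let `T` be the support of `x`. Minimality of `‖xhat‖₁` gives
the cone condition `‖h_{Tᶜ}‖₁ ≤ ‖h_T‖₁`. Cut `Tᶜ` into blocks `B₀, B₁, …` of `k` indices in order
of decreasing `|h|`; every entry of `h` on `B_{j+1}` is at most the mean of `|h|` on `B_j`, hence
`∑_{j ≥ 1} ‖h_{B_j}‖₂ ≤ ‖h_{Tᶜ}‖₁ / √k ≤ ‖h_T‖₁ / √k ≤ ‖h_T‖₂`. The RIP applied to `u ± v` bounds
`⟪Au, Av⟫` by `δ ‖u‖₂ ‖v‖₂` for disjointly supported `k`-sparse `u, v`. For `P = h_{T ∪ B₀}` we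
have `AP = -∑_{j ≥ 1} A h_{B_j}`, whence `(1 - δ) ‖P‖₂² ≤ ‖AP‖₂² ≤ √2 δ ‖P‖₂²`. Since
`δ < √2 - 1`, `P = 0`, and the cone condition then forces `h = 0`. -/

open Function Matrix

section Blocks

variable {ι : Type*} [DecidableEq ι]

theorem Finset.exists_subset_card_eq_forall_le {α : Type*} [LinearOrder α] (f : ι → α)
    {S : Finset ι} {k : ℕ} (hk : k ≤ #S) :
    ∃ B ⊆ S, #B = k ∧ ∀ a ∈ S \ B, ∀ b ∈ B, f a ≤ f b := by
  induction k with
  | zero => exact ⟨∅, empty_subset _, card_empty, by simp⟩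
  | succ k ih =>
    obtain ⟨B, hBS, hBk, hB⟩ := ih (by omega)
    have hne : (S \ B).Nonempty := by
      rw [← card_pos, card_sdiff_of_subset hBS]
      omega
    obtain ⟨c, hc, hc_max⟩ := (S \ B).exists_max_image f hne
    refine ⟨insert c B, insert_subset (sdiff_subset hc) hBS, ?_, ?_⟩
    · rw [card_insert_of_notMem (mem_sdiff.1 hc).2, hBk]
    · intro a ha b hb
      rw [sdiff_insert] at ha
      rcases mem_insert.1 hb with rfl | hb
      · exact hc_max a (mem_of_mem_erase ha)
      · exact hB a (mem_of_mem_erase ha) b hb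

/-- Models `S`, sorted by decreasing `f`, cut into consecutive blocks `B 0, …, B N` of `k`
elements (the last one possibly shorter); of the ordering only its consequence `mul_le_sum` is
kept. -/
structure IsBlockPartition (f : ι → ℝ) (k : ℕ) (S : Finset ι) (N : ℕ) (B : ℕ → Finset ι) :
    Prop where
  card_le : ∀ j, #(B j) ≤ k
  pairwise_disjoint : Pairwise (Disjoint on B)
  subset : ∀ j, B j ⊆ S
  biUnion_range : (range (N + 1)).biUnion B = S
  mul_le_sum : ∀ j, ∀ a ∈ B (j + 1), k * f a ≤ ∑ b ∈ B j, f b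

namespace IsBlockPartition

variable {f : ι → ℝ} {k : ℕ} {S : Finset ι} {N : ℕ} {B : ℕ → Finset ι}

theorem of_card_le (hS : #S ≤ k) :
    IsBlockPartition f k S 0 (fun j => if j = 0 then S else ∅) where
  card_le j := by split_ifs <;> simp [hS]
  pairwise_disjoint i j hij := by
    simp only [onFun]
    split_ifs <;> simp_all
  subset j := by split_ifs <;> simp
  biUnion_range := by simp
  mul_le_sum j := by simp

theorem cons {B₀ : Finset ι} (hB : IsBlockPartition f k (S \ B₀) N B) (hB₀S : B₀ ⊆ S)
    (hB₀k : #B₀ = k) (hB₀ : ∀ a ∈ S \ B₀, ∀ b ∈ B₀, f a ≤ f b) :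
    IsBlockPartition f k S (N + 1) (fun | 0 => B₀ | j + 1 => B j) where
  card_le
    | 0 => hB₀k.le
    | j + 1 => hB.card_le j
  pairwise_disjoint
    | 0, 0, h => absurd rfl h
    | 0, j + 1, _ => disjoint_sdiff.mono_right (hB.subset j)
    | i + 1, 0, _ => (disjoint_sdiff.mono_right (hB.subset i)).symm
    | i + 1, j + 1, h => hB.pairwise_disjoint (fun hij => h (congrArg (· + 1) hij))
  subset
    | 0 => hB₀S
    | j + 1 => (hB.subset j).trans sdiff_subset
  biUnion_range := by
    rw [range_add_one', biUnion_insert, map_eq_image, image_biUnion]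
    change B₀ ∪ (range (N + 1)).biUnion B = S
    rw [hB.biUnion_range, union_sdiff_of_subset hB₀S]
  mul_le_sum
    | 0, a, ha => by
      calc k * f a = ∑ _b ∈ B₀, f a := by rw [sum_const, hB₀k, nsmul_eq_mul]
        _ ≤ ∑ b ∈ B₀, f b := sum_le_sum (hB₀ a (hB.subset 0 ha))
    | j + 1, a, ha => hB.mul_le_sum j a ha

end IsBlockPartition

theorem exists_isBlockPartition (f : ι → ℝ) {k : ℕ} (hk : 0 < k) (S : Finset ι) :
    ∃ N B, IsBlockPartition f k S N B := by
  induction S using Finset.strongInduction with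
  | H S ih =>
    rcases le_or_gt #S k with hS | hS
    · exact ⟨0, _, .of_card_le hS⟩
    obtain ⟨B₀, hB₀S, hB₀k, hB₀⟩ := exists_subset_card_eq_forall_le f hS.le
    obtain ⟨N, B, hB⟩ := ih (S \ B₀) (sdiff_ssubset hB₀S (card_pos.1 (hB₀k ▸ hk)))
    exact ⟨N + 1, _, hB.cons hB₀S hB₀k hB₀⟩

namespace IsBlockPartition

variable {f : ι → ℝ} {k : ℕ} {S : Finset ι} {N : ℕ} {B : ℕ → Finset ι}

theorem sum_sum {M : Type*} [AddCommMonoid M] (hB : IsBlockPartition f k S N B) (g : ι → M) :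
    ∑ j ∈ range (N + 1), ∑ i ∈ B j, g i = ∑ i ∈ S, g i := by
  rw [← hB.biUnion_range, sum_biUnion (hB.pairwise_disjoint.set_pairwise _)]

theorem indicator_eq {M : Type*} [AddCommMonoid M] (hB : IsBlockPartition f k S N B) (g : ι → M) :
    Set.indicator S g = ∑ j ∈ range (N + 1), Set.indicator (B j) g := by
  ext i
  rw [← hB.biUnion_range, coe_biUnion, Finset.sum_apply]
  simpa using indicator_biUnion_apply (range (N + 1)) (fun j => (B j : Set ι)) (f := g)
    (fun i _ j _ hij => disjoint_coe.2 (hB.pairwise_disjoint hij)) i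

end IsBlockPartition

end Blocks

theorem sum_sq_eq_dotProduct_self {ι : Type*} [Fintype ι] (v : ι → ℝ) :
    ∑ i, v i ^ 2 = v ⬝ᵥ v := by
  simp [dotProduct, sq]

theorem dotProduct_eq_zero_of_disjoint_support {ι : Type*} [Fintype ι] {u v : ι → ℝ}
    (huv : Disjoint (support u) (support v)) : u ⬝ᵥ v = 0 :=
  sum_eq_zero fun i _ => by
    by_cases hu : u i = 0
    · rw [hu, zero_mul]
    · rw [notMem_support.1 (Set.disjoint_left.1 huv hu), mul_zero]

section Norms

variable {n : ℕ}

theorem l2norm_nonneg (v : Fin n → ℝ) : 0 ≤ l2norm v := Real.sqrt_nonneg _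

theorem sq_l2norm (v : Fin n → ℝ) : l2norm v ^ 2 = v ⬝ᵥ v := by
  rw [l2norm, Real.sq_sqrt (by positivity), sum_sq_eq_dotProduct_self]

theorem l2norm_eq_zero {v : Fin n → ℝ} : l2norm v = 0 ↔ v = 0 := by
  rw [← sq_eq_zero_iff, sq_l2norm, dotProduct_self_eq_zero]

theorem l2norm_neg (v : Fin n → ℝ) : l2norm (-v) = l2norm v := by
  simp [l2norm]

theorem sq_l2norm_add {u v : Fin n → ℝ} (huv : Disjoint (support u) (support v)) :
    l2norm (u + v) ^ 2 = l2norm u ^ 2 + l2norm v ^ 2 := by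
  simp only [sq_l2norm, add_dotProduct, dotProduct_add, dotProduct_comm v u,
    dotProduct_eq_zero_of_disjoint_support huv]
  ring

theorem l2norm_indicator (T : Finset (Fin n)) (v : Fin n → ℝ) :
    l2norm (Set.indicator T v) = √(∑ i ∈ T, v i ^ 2) := by
  rw [l2norm, ← sum_indicator_subset _ (subset_univ T)]
  congr 1
  refine sum_congr rfl fun i _ => ?_
  by_cases hi : i ∈ T <;> simp [hi]

theorem sum_abs_le_sqrt_mul_l2norm_indicator {k : ℕ} {T : Finset (Fin n)} (hT : #T ≤ k)
    (v : Fin n → ℝ) : ∑ i ∈ T, |v i| ≤ √k * l2norm (Set.indicator T v) := by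
  rw [l2norm_indicator, ← Real.sqrt_mul (Nat.cast_nonneg k),
    Real.le_sqrt (sum_nonneg fun i _ => abs_nonneg _) (by positivity)]
  calc (∑ i ∈ T, |v i|) ^ 2 ≤ #T * ∑ i ∈ T, |v i| ^ 2 := sq_sum_le_card_mul_sum_sq
    _ ≤ k * ∑ i ∈ T, v i ^ 2 := by
      simp only [sq_abs]
      gcongr

theorem l2norm_indicator_le_of_mul_abs_le {k : ℕ} {U : Finset (Fin n)} (hU : #U ≤ k)
    {v : Fin n → ℝ} {s : ℝ} (hs : 0 ≤ s) (hv : ∀ a ∈ U, k * |v a| ≤ s) :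
    l2norm (Set.indicator U v) ≤ s / √k := by
  rcases U.eq_empty_or_nonempty with rfl | ⟨a, ha⟩
  · simpa [l2norm] using div_nonneg hs (Real.sqrt_nonneg _)
  have hk : (0 : ℝ) < k := by exact_mod_cast (card_pos.2 ⟨a, ha⟩).trans_le hU
  rw [l2norm_indicator, ← Real.sqrt_sq hs, ← Real.sqrt_div' _ hk.le]
  refine Real.sqrt_le_sqrt ?_
  calc ∑ i ∈ U, v i ^ 2 ≤ ∑ _i ∈ U, (s / k) ^ 2 := by
        refine sum_le_sum fun i hi => ?_
        rw [← sq_abs]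
        gcongr
        rw [le_div_iff₀ hk, mul_comm]
        exact hv i hi
    _ = #U * (s / k) ^ 2 := by rw [sum_const, nsmul_eq_mul]
    _ ≤ k * (s / k) ^ 2 := by gcongr
    _ = s ^ 2 / k := by field_simp

end Norms

theorem IsBlockPartition.sum_l2norm_indicator_succ_le {n k N : ℕ} {h : Fin n → ℝ}
    {S : Finset (Fin n)} {B : ℕ → Finset (Fin n)}
    (hB : IsBlockPartition (fun i => |h i|) k S N B) :
    ∑ j ∈ range N, l2norm (Set.indicator (B (j + 1)) h) ≤ (∑ i ∈ S, |h i|) / √k :=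
  calc _ ≤ ∑ j ∈ range N, (∑ i ∈ B j, |h i|) / √k :=
        sum_le_sum fun j _ => l2norm_indicator_le_of_mul_abs_le (hB.card_le _)
          (sum_nonneg fun i _ => abs_nonneg _) (hB.mul_le_sum j)
    _ ≤ ∑ j ∈ range (N + 1), (∑ i ∈ B j, |h i|) / √k :=
        sum_le_sum_of_subset_of_nonneg (range_subset_range.2 N.le_succ) fun _ _ _ => by positivity
    _ = (∑ i ∈ S, |h i|) / √k := by rw [← sum_div, hB.sum_sum]


section Sparsity

variable {n k l : ℕ} {u v : Fin n → ℝ}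

theorem KSparse.of_support_subset {T : Finset (Fin n)} (hT : #T ≤ k) (hv : support v ⊆ T) :
    KSparse k v :=
  (Set.ncard_le_ncard hv (Set.toFinite _)).trans ((Set.ncard_coe_finset T).trans_le hT)

theorem kSparse_indicator {T : Finset (Fin n)} (hT : #T ≤ k) (v : Fin n → ℝ) :
    KSparse k (Set.indicator T v) :=
  .of_support_subset hT Set.support_indicator_subset

theorem KSparse.exists_finset (hv : KSparse k v) :
    ∃ T : Finset (Fin n), #T ≤ k ∧ ∀ i ∉ T, v i = 0 :=
  ⟨(Set.toFinite (support v)).toFinset, by rwa [← Set.ncard_eq_toFinset_card], by simp⟩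

theorem KSparse.add (hu : KSparse k u) (hv : KSparse l v) : KSparse (k + l) (u + v) :=
  (Set.ncard_le_ncard (support_add u v) (Set.toFinite _)).trans
    ((Set.ncard_union_le _ _).trans (add_le_add hu hv))

theorem KSparse.neg (hv : KSparse k v) : KSparse k (-v) := by
  simpa [KSparse] using hv

theorem KSparse.smul (hv : KSparse k v) (c : ℝ) : KSparse k (c • v) :=
  (Set.ncard_le_ncard (support_const_smul_subset c v) (Set.toFinite _)).trans hv

end Sparsity

theorem sum_compl_abs_le_of_l1norm_add_le {n : ℕ} {x h : Fin n → ℝ} {T : Finset (Fin n)}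
    (hx : ∀ i ∉ T, x i = 0) (hle : l1norm (x + h) ≤ l1norm x) :
    ∑ i ∈ Tᶜ, |h i| ≤ ∑ i ∈ T, |h i| := by
  have hxh : l1norm (x + h) = ∑ i ∈ T, |x i + h i| + ∑ i ∈ Tᶜ, |h i| := by
    rw [l1norm, ← sum_add_sum_compl T]
    congr 1
    exact sum_congr rfl fun i hi => by simp [hx i (mem_compl.1 hi)]
  have hx' : l1norm x = ∑ i ∈ T, |x i| := by
    rw [l1norm, ← sum_add_sum_compl T, add_eq_left]
    exact sum_eq_zero fun i hi => by simp [hx i (mem_compl.1 hi)]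
  have htriangle : ∑ i ∈ T, |x i| ≤ ∑ i ∈ T, |x i + h i| + ∑ i ∈ T, |h i| := by
    rw [← sum_add_distrib]
    exact sum_le_sum fun i _ => by simpa using abs_sub (x i + h i) (h i)
  linarith

theorem eq_zero_of_sum_compl_abs_le {ι : Type*} [Fintype ι] [DecidableEq ι] {h : ι → ℝ}
    {T : Finset ι} (hcone : ∑ i ∈ Tᶜ, |h i| ≤ ∑ i ∈ T, |h i|) (hT : ∀ i ∈ T, h i = 0) :
    h = 0 := by
  have hTc : ∑ i ∈ Tᶜ, |h i| = 0 :=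
    le_antisymm (hcone.trans_eq (sum_eq_zero fun i hi => by simp [hT i hi]))
      (sum_nonneg fun i _ => abs_nonneg _)
  funext i
  by_cases hi : i ∈ T
  · exact hT i hi
  · exact abs_eq_zero.1
      ((sum_eq_zero_iff_of_nonneg fun i _ => abs_nonneg _).1 hTc i (mem_compl.2 hi))

namespace RIP

variable {m n k : ℕ} {A : Matrix (Fin m) (Fin n) ℝ} {δ : ℝ} {u v : Fin n → ℝ}

theorem two_mul_dotProduct_mulVec_le (hA : RIP A (2 * k) δ) (hu : KSparse k u) (hv : KSparse k v)
    (huv : Disjoint (support u) (support v)) :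
    2 * (A *ᵥ u ⬝ᵥ A *ᵥ v) ≤ δ * (u ⬝ᵥ u + v ⬝ᵥ v) := by
  have hsum := (hA (u + v) (two_mul k ▸ hu.add hv)).2
  have hdiff := (hA (u - v) (two_mul k ▸ sub_eq_add_neg u v ▸ hu.add hv.neg)).1
  simp only [sum_sq_eq_dotProduct_self, mulVec_add, mulVec_sub, add_dotProduct, dotProduct_add,
    sub_dotProduct, dotProduct_sub, dotProduct_comm v u, dotProduct_comm (A *ᵥ v) (A *ᵥ u),
    dotProduct_eq_zero_of_disjoint_support huv] at hsum hdiff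
  linarith

theorem dotProduct_mulVec_le (hA : RIP A (2 * k) δ) (hu : KSparse k u) (hv : KSparse k v)
    (huv : Disjoint (support u) (support v)) :
    A *ᵥ u ⬝ᵥ A *ᵥ v ≤ δ * (l2norm u * l2norm v) := by
  rcases (mul_nonneg (l2norm_nonneg u) (l2norm_nonneg v)).eq_or_lt with hab | hab
  · rcases mul_eq_zero.1 hab.symm with ha | hb
    · rw [ha, zero_mul, mul_zero, l2norm_eq_zero.1 ha, mulVec_zero, zero_dotProduct]
    · rw [hb, mul_zero, mul_zero, l2norm_eq_zero.1 hb, mulVec_zero, dotProduct_zero]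
  -- `‖v‖ • u` and `‖u‖ • v` have the same norm, which turns the bound by `‖u‖² + ‖v‖²` into one
  -- by `‖u‖ * ‖v‖`.
  have h := hA.two_mul_dotProduct_mulVec_le (hu.smul (l2norm v)) (hv.smul (l2norm u))
    (huv.mono (support_const_smul_subset _ u) (support_const_smul_subset _ v))
  simp only [mulVec_smul, smul_dotProduct, dotProduct_smul, smul_eq_mul, ← sq_l2norm] at h
  nlinarith

theorem dotProduct_mulVec_self_le (hA : RIP A (2 * k) δ) {p₀ p₁ : Fin n → ℝ}
    {q : ℕ → Fin n → ℝ} {N : ℕ} (hp₀ : KSparse k p₀) (hp₁ : KSparse k p₁)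
    (hq : ∀ j, KSparse k (q j)) (hp₀q : ∀ j, Disjoint (support p₀) (support (q j)))
    (hp₁q : ∀ j, Disjoint (support p₁) (support (q j)))
    (hsum : A *ᵥ (p₀ + p₁) + ∑ j ∈ range N, A *ᵥ q j = 0) :
    A *ᵥ (p₀ + p₁) ⬝ᵥ A *ᵥ (p₀ + p₁) ≤
      δ * (l2norm p₀ + l2norm p₁) * ∑ j ∈ range N, l2norm (q j) := by
  have hAP : ∑ j ∈ range N, A *ᵥ (-q j) = A *ᵥ (p₀ + p₁) := by
    simp only [mulVec_neg, sum_neg_distrib]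
    exact (eq_neg_of_add_eq_zero_left hsum).symm
  calc A *ᵥ (p₀ + p₁) ⬝ᵥ A *ᵥ (p₀ + p₁)
      = ∑ j ∈ range N, (A *ᵥ p₀ ⬝ᵥ A *ᵥ (-q j) + A *ᵥ p₁ ⬝ᵥ A *ᵥ (-q j)) := by
        nth_rw 2 [← hAP]
        simp only [dotProduct_sum, mulVec_add, add_dotProduct]
    _ ≤ ∑ j ∈ range N, (δ * (l2norm p₀ * l2norm (-q j)) + δ * (l2norm p₁ * l2norm (-q j))) := by
        gcongr with j
        · exact hA.dotProduct_mulVec_le hp₀ (hq j).neg (support_neg (q j) ▸ hp₀q j)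
        · exact hA.dotProduct_mulVec_le hp₁ (hq j).neg (support_neg (q j) ▸ hp₁q j)
    _ = δ * (l2norm p₀ + l2norm p₁) * ∑ j ∈ range N, l2norm (q j) := by
        rw [mul_sum]
        exact sum_congr rfl fun j _ => by rw [l2norm_neg]; ring

theorem eq_zero_of_add_sum_eq_zero (hA : RIP A (2 * k) δ) (hδ₀ : 0 ≤ δ) (hδ : δ < √2 - 1)
    {p₀ p₁ : Fin n → ℝ} {q : ℕ → Fin n → ℝ} {N : ℕ} (hp₀ : KSparse k p₀) (hp₁ : KSparse k p₁)
    (hq : ∀ j, KSparse k (q j)) (hp₀p₁ : Disjoint (support p₀) (support p₁))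
    (hp₀q : ∀ j, Disjoint (support p₀) (support (q j)))
    (hp₁q : ∀ j, Disjoint (support p₁) (support (q j)))
    (hsum : A *ᵥ (p₀ + p₁) + ∑ j ∈ range N, A *ᵥ q j = 0)
    (htail : ∑ j ∈ range N, l2norm (q j) ≤ l2norm p₀) : p₀ = 0 := by
  set a := l2norm p₀
  set b := l2norm p₁
  set c := l2norm (p₀ + p₁)
  have ha : 0 ≤ a := l2norm_nonneg _
  have hb : 0 ≤ b := l2norm_nonneg _
  have hc : 0 ≤ c := l2norm_nonneg _
  have hpyth : c ^ 2 = a ^ 2 + b ^ 2 := sq_l2norm_add hp₀p₁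
  have hac : a ≤ c := by nlinarith
  have habc : a + b ≤ √2 * c := by
    rw [← Real.sqrt_sq hc, ← Real.sqrt_mul zero_le_two,
      Real.le_sqrt (by positivity) (by positivity)]
    nlinarith [sq_nonneg (a - b)]
  have hlower : (1 - δ) * c ^ 2 ≤ A *ᵥ (p₀ + p₁) ⬝ᵥ A *ᵥ (p₀ + p₁) := by
    have := (hA (p₀ + p₁) (two_mul k ▸ hp₀.add hp₁)).1
    rwa [sum_sq_eq_dotProduct_self, sum_sq_eq_dotProduct_self, ← sq_l2norm] at this
  have hupper : A *ᵥ (p₀ + p₁) ⬝ᵥ A *ᵥ (p₀ + p₁) ≤ √2 * δ * c ^ 2 :=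
    calc _ ≤ δ * (a + b) * ∑ j ∈ range N, l2norm (q j) :=
          hA.dotProduct_mulVec_self_le hp₀ hp₁ hq hp₀q hp₁q hsum
      _ ≤ δ * (√2 * c) * c := by
          gcongr
          · exact sum_nonneg fun j _ => l2norm_nonneg _
          · exact htail.trans hac
      _ = √2 * δ * c ^ 2 := by ring
  have hc0 : c = 0 := by
    have h2 : √2 * √2 = 2 := Real.mul_self_sqrt zero_le_two
    have : (1 - δ - √2 * δ) * c ^ 2 ≤ 0 := by linarith
    have hpos : 0 < 1 - δ - √2 * δ := by nlinarith
    have hc2 : c ^ 2 ≤ 0 := le_of_mul_le_mul_left (by simpa using this) hpos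
    exact pow_eq_zero_iff two_ne_zero |>.1 (le_antisymm hc2 (sq_nonneg c))
  exact l2norm_eq_zero.1 (le_antisymm (hac.trans hc0.le) ha)

theorem eq_zero_of_mulVec_eq_zero (hA : RIP A (2 * k) δ) (hδ₀ : 0 ≤ δ) (hδ : δ < √2 - 1)
    (hk : 0 < k) {h : Fin n → ℝ} (hAh : A *ᵥ h = 0) {T : Finset (Fin n)} (hT : #T ≤ k)
    (hcone : ∑ i ∈ Tᶜ, |h i| ≤ ∑ i ∈ T, |h i|) : h = 0 := by
  obtain ⟨N, B, hB⟩ := exists_isBlockPartition (fun i => |h i|) hk Tᶜ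
  have hsupp (U : Finset (Fin n)) : support (Set.indicator U h) ⊆ U :=
    Set.support_indicator_subset
  have hTB (j : ℕ) : Disjoint (support (Set.indicator T h)) (support (Set.indicator (B j) h)) :=
    (disjoint_coe.2 (disjoint_compl_right.mono_right (hB.subset j))).mono (hsupp _) (hsupp _)
  have hBB (j : ℕ) :
      Disjoint (support (Set.indicator (B 0) h)) (support (Set.indicator (B (j + 1)) h)) :=
    (disjoint_coe.2 (hB.pairwise_disjoint (by omega))).mono (hsupp _) (hsupp _)
  have hdecomp : Set.indicator T h + Set.indicator (B 0) h +
      ∑ j ∈ range N, Set.indicator (B (j + 1)) h = h := by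
    rw [add_assoc, add_comm (Set.indicator (B 0 : Set (Fin n)) h),
      ← sum_range_succ' (fun j => Set.indicator (B j : Set (Fin n)) h), ← hB.indicator_eq,
      coe_compl, Set.indicator_self_add_compl]
  have htail : ∑ j ∈ range N, l2norm (Set.indicator (B (j + 1)) h) ≤
      l2norm (Set.indicator T h) :=
    calc _ ≤ (∑ i ∈ Tᶜ, |h i|) / √k := hB.sum_l2norm_indicator_succ_le
      _ ≤ (∑ i ∈ T, |h i|) / √k := by gcongr
      _ ≤ l2norm (Set.indicator T h) := by
          rw [div_le_iff₀' (by positivity)]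
          exact sum_abs_le_sqrt_mul_l2norm_indicator hT h
  have hT₀ : Set.indicator T h = 0 :=
    hA.eq_zero_of_add_sum_eq_zero hδ₀ hδ (kSparse_indicator hT h)
      (kSparse_indicator (hB.card_le 0) h) (fun j => kSparse_indicator (hB.card_le _) h)
      (hTB 0) (fun j => hTB _) hBB
      (by rw [← mulVec_sum, ← mulVec_add, hdecomp, hAh]) htail
  exact eq_zero_of_sum_compl_abs_le hcone fun i hi => by simpa [hi] using congrFun hT₀ i

end RIP

theorem basis_pursuit_exact_recovery_general {m n k : ℕ}
    (hk : 1 ≤ k)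
    (A : Matrix (Fin m) (Fin n) ℝ) (δ : ℝ) (hδ0 : 0 < δ)
    (hδ : δ < Real.sqrt 2 - 1)
    (hRIP : RIP A (2 * k) δ)
    (x : Fin n → ℝ) (hx : KSparse k x)
    (y : Fin m → ℝ) (hy : y = A.mulVec x)
    (xhat : Fin n → ℝ)
    (hfeas : A.mulVec xhat = y)
    (hopt : ∀ z : Fin n → ℝ, A.mulVec z = y → l1norm xhat ≤ l1norm z) :
    xhat = x := by
  obtain ⟨T, hT, hxT⟩ := hx.exists_finset
  have hA : A *ᵥ (xhat - x) = 0 := by rw [mulVec_sub, hfeas, hy, sub_self]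
  have hcone : ∑ i ∈ Tᶜ, |(xhat - x) i| ≤ ∑ i ∈ T, |(xhat - x) i| :=
    sum_compl_abs_le_of_l1norm_add_le hxT (by simpa using hopt x hy.symm)
  exact sub_eq_zero.1 (hRIP.eq_zero_of_mulVec_eq_zero hδ0.le hδ hk hA hT hcone)

theorem basis_pursuit_exact_recovery {m n k : ℕ}
    (hk : 1 ≤ k) (hn : 2 * k ≤ n)
    (A : Matrix (Fin m) (Fin n) ℝ) (δ : ℝ) (hδ0 : 0 < δ)
    (hδ : δ < Real.sqrt 2 - 1)
    (hRIP : RIP A (2 * k) δ)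
    (x : Fin n → ℝ) (hx : KSparse k x)
    (y : Fin m → ℝ) (hy : y = A.mulVec x)
    (xhat : Fin n → ℝ)
    (hfeas : A.mulVec xhat = y)
    (hopt : ∀ z : Fin n → ℝ, A.mulVec z = y → l1norm xhat ≤ l1norm z) :
    xhat = x :=
  basis_pursuit_exact_recovery_general hk A δ hδ0 hδ hRIP x hx y hy xhat hfeas hopt
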